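/- Noninterference for IKC extended with Booleans: for every closed term · ⊢ f : □Bool ⟶ Bool of IKC^Bool and any two closed terms · ⊢ s₁, s₂ : □Bool, it holds that app(f, s₁) ≈ app(f, s₂) in the equational theory of IKC^Bool. -/

import Mathlib

namespace IKC

/-- Types of IKC^Bool: base type ι, functions, box, Booleans. -/
inductive Ty : Type
  | base : Ty
  | arr : Ty → Ty → Ty
  | box : Ty → Ty
  | bool : Ty

/-- Typing contexts: empty, extension by a type, extension by a lock 🔒. -/
inductive Cx : Type
  | nil : Cx
  | snoc : Cx → Ty → Cx
  | lock : Cx → Cx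

/-- IKC modal accessibility relation Δ ◁ Γ: Γ = Δ,🔒,Δ' with Δ' lock-free. -/
inductive Ext : Cx → Cx → Type
  | nil : Ext Γ (.lock Γ)
  | var : Ext Δ Γ → Ext Δ (.snoc Γ A)

/-- General context extensions Γ ++ Γ' (by variables and locks), used in the
elimination rule for Bool. -/
inductive GExt : Cx → Cx → Type
  | nil : GExt Γ Γ
  | var : GExt Δ Γ → GExt Δ (.snoc Γ A)
  | lock : GExt Δ Γ → GExt Δ (.lock Γ)

/-- Transitivity of general context extensions. -/
def transG : {Δ Γ Θ : Cx} → GExt Δ Γ → GExt Γ Θ → GExt Δ Θ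
  | _, _, _, g, .nil => g
  | _, _, _, g, .var g' => .var (transG g g')
  | _, _, _, g, .lock g' => .lock (transG g g')

/-- A modal accessibility proof is in particular a general extension. -/
def extToG : {Δ Γ : Cx} → Ext Δ Γ → GExt Δ Γ
  | _, _, .nil => .lock .nil
  | _, _, .var e => .var (extToG e)

/-- Order-preserving embeddings Γ ≤ Γ'. -/
inductive Ope : Cx → Cx → Type
  | base : Ope .nil .nil
  | drop : Ope Γ Γ' → Ope Γ (.snoc Γ' A)
  | keep : Ope Γ Γ' → Ope (.snoc Γ A) (.snoc Γ' A)
  | keepLock : Ope Γ Γ' → Ope (.lock Γ) (.lock Γ')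

/-- Identity OPE. -/
def idOpe : (Γ : Cx) → Ope Γ Γ
  | .nil => .base
  | .snoc Γ _ => .keep (idOpe Γ)
  | .lock Γ => .keepLock (idOpe Γ)

/-- De Bruijn variables (no rule through locks). -/
inductive Var : Cx → Ty → Type
  | zero : Var (.snoc Γ A) A
  | succ : Var Γ A → Var (.snoc Γ B) A

/-- Intrinsically-typed terms of IKC^Bool: IKC extended with true, false and
an if-then-else eliminator whose branches and conclusion may live in an
extension Γ ++ Γ' of the scrutinee's context Γ. -/
inductive Tm : Cx → Ty → Type
  | var : Var Γ A → Tm Γ A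
  | lam : Tm (.snoc Γ A) B → Tm Γ (.arr A B)
  | app : Tm Γ (.arr A B) → Tm Γ A → Tm Γ B
  | box : Tm (.lock Γ) A → Tm Γ (.box A)
  | unbox : Tm Δ (.box A) → Ext Δ Γ → Tm Γ A
  | tt : Tm Γ .bool
  | ff : Tm Γ .bool
  | ite : GExt Γ Θ → Tm Γ .bool → Tm Θ A → Tm Θ A → Tm Θ A

/-- Factorization of e : Δ ◁ Γ along an OPE o : Γ ≤ Γ'. -/
def factor : {Δ Γ Γ' : Cx} → Ext Δ Γ → Ope Γ Γ' → (Δ' : Cx) × Ope Δ Δ' × Ext Δ' Γ'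
  | _, _, _, e, .drop o =>
    let f := factor e o
    ⟨f.1, f.2.1, .var f.2.2⟩
  | _, _, _, .nil, .keepLock o => ⟨_, o, .nil⟩
  | _, _, _, .var e, .keep o =>
    let f := factor e o
    ⟨f.1, f.2.1, .var f.2.2⟩

/-- Factorization of a general extension along an OPE. -/
def factorG : {Δ Γ Γ' : Cx} → GExt Δ Γ → Ope Γ Γ' → (Δ' : Cx) × Ope Δ Δ' × GExt Δ' Γ'
  | _, _, _, g, .drop o =>
    let f := factorG g o
    ⟨f.1, f.2.1, .var f.2.2⟩
  | _, _, _, .nil, o => ⟨_, o, .nil⟩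
  | _, _, _, .var g, .keep o =>
    let f := factorG g o
    ⟨f.1, f.2.1, .var f.2.2⟩
  | _, _, _, .lock g, .keepLock o =>
    let f := factorG g o
    ⟨f.1, f.2.1, .lock f.2.2⟩

/-- An accessibility proof e : Δ ◁ Γ yields an OPE Δ,🔒 ≤ Γ. -/
def factorOpe : {Δ Γ : Cx} → Ext Δ Γ → Ope (.lock Δ) Γ
  | _, _, .nil => idOpe _
  | _, _, .var e => .drop (factorOpe e)

/-- Weakening of variables along an OPE. -/
def wkVar : {Γ Γ' : Cx} → Ope Γ Γ' → Var Γ A → Var Γ' A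
  | _, _, .drop o, v => .succ (wkVar o v)
  | _, _, .keep _, .zero => .zero
  | _, _, .keep o, .succ v => .succ (wkVar o v)

/-- Weakening (renaming) of terms along an OPE. -/
def wkTm : {Γ Γ' : Cx} → Ope Γ Γ' → Tm Γ A → Tm Γ' A
  | _, _, o, .var v => .var (wkVar o v)
  | _, _, o, .lam t => .lam (wkTm (.keep o) t)
  | _, _, o, .app t u => .app (wkTm o t) (wkTm o u)
  | _, _, o, .box t => .box (wkTm (.keepLock o) t)
  | _, _, o, .unbox t e => .unbox (wkTm (factor e o).2.1 t) (factor e o).2.2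
  | _, _, _, .tt => .tt
  | _, _, _, .ff => .ff
  | _, _, o, .ite g b t₁ t₂ =>
      .ite (factorG g o).2.2 (wkTm (factorG g o).2.1 b) (wkTm o t₁) (wkTm o t₂)

/-- Substitutions Γ ⊢ˢ s : Δ. -/
inductive Sub : Cx → Cx → Type
  | empty : Sub Γ .nil
  | snoc : Sub Γ Δ → Tm Γ A → Sub Γ (.snoc Δ A)
  | lock : Sub Θ Δ → Ext Θ Γ → Sub Γ (.lock Δ)

/-- Weakening of substitutions along an OPE. -/
def wkSub : {Γ Γ' Δ : Cx} → Ope Γ Γ' → Sub Γ Δ → Sub Γ' Δ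
  | _, _, _, _, .empty => .empty
  | _, _, _, o, .snoc s t => .snoc (wkSub o s) (wkTm o t)
  | _, _, _, o, .lock s e => .lock (wkSub (factor e o).2.1 s) (factor e o).2.2

/-- Identity substitution. -/
def idSub : (Γ : Cx) → Sub Γ Γ
  | .nil => .empty
  | .snoc Γ _ => .snoc (wkSub (.drop (idOpe Γ)) (idSub Γ)) (.var .zero)
  | .lock Γ => .lock (idSub Γ) .nil

/-- Action of a substitution on a variable. -/
def substVar : {Γ Δ : Cx} → Sub Γ Δ → Var Δ A → Tm Γ A
  | _, _, .snoc _ t, .zero => t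
  | _, _, .snoc s _, .succ v => substVar s v

/-- Trimming a substitution along the modal accessibility relation. -/
def trimSub : {Γ Δ Θ : Cx} → Sub Γ Δ → Ext Θ Δ → (Θ' : Cx) × Sub Θ' Θ × Ext Θ' Γ
  | _, _, _, .lock s e, .nil => ⟨_, s, e⟩
  | _, _, _, .snoc s _, .var e => trimSub s e

/-- Trimming a substitution along a general extension. -/
def trimG : {Γ' Θ Γ : Cx} → Sub Γ' Θ → GExt Γ Θ → (Γ₀ : Cx) × Sub Γ₀ Γ × GExt Γ₀ Γ'
  | Γ', _, _, s, .nil => ⟨Γ', s, .nil⟩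
  | _, _, _, .snoc s _, .var g => trimG s g
  | _, _, _, .lock s e, .lock g =>
    let f := trimG s g
    ⟨f.1, f.2.1, transG f.2.2 (extToG e)⟩

/-- Application of a substitution to a term. -/
def subst : {Γ Δ : Cx} → Sub Γ Δ → Tm Δ A → Tm Γ A
  | _, _, s, .var v => substVar s v
  | _, _, s, .lam t => .lam (subst (.snoc (wkSub (.drop (idOpe _)) s) (.var .zero)) t)
  | _, _, s, .app t u => .app (subst s t) (subst s u)
  | _, _, s, .box t => .box (subst (.lock s .nil) t)
  | _, _, s, .unbox t e => .unbox (subst (trimSub s e).2.1 t) (trimSub s e).2.2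
  | _, _, _, .tt => .tt
  | _, _, _, .ff => .ff
  | _, _, s, .ite g b t₁ t₂ =>
      .ite (trimG s g).2.2 (subst (trimG s g).2.1 b) (subst s t₁) (subst s t₂)

/-- The equational theory ≈ of IKC^Bool: the rules of IKC, the βη-rules for
Bool, and commuting conversions for the eliminators over if-then-else. -/
inductive Conv : {Γ : Cx} → {A : Ty} → Tm Γ A → Tm Γ A → Prop
  | refl (t : Tm Γ A) : Conv t t
  | symm : Conv t u → Conv u t
  | trans : Conv t u → Conv u v → Conv t v
  | congLam : Conv t t' → Conv (.lam t) (.lam t')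
  | congApp : Conv t t' → Conv u u' → Conv (.app t u) (.app t' u')
  | congBox : Conv t t' → Conv (.box t) (.box t')
  | congUnbox {t t' : Tm Δ (.box A)} {e : Ext Δ Γ} :
      Conv t t' → Conv (.unbox t e) (.unbox t' e)
  | congIte {g : GExt Γ Θ} {b b' : Tm Γ .bool} {t₁ t₁' t₂ t₂' : Tm Θ A} :
      Conv b b' → Conv t₁ t₁' → Conv t₂ t₂' →
      Conv (.ite g b t₁ t₂) (.ite g b' t₁' t₂')
  | betaFun (t : Tm (.snoc Γ A) B) (u : Tm Γ A) :
      Conv (.app (.lam t) u) (subst (.snoc (idSub Γ) u) t)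
  | etaFun (t : Tm Γ (.arr A B)) :
      Conv t (.lam (.app (wkTm (.drop (idOpe Γ)) t) (.var .zero)))
  | betaBox (t : Tm (.lock Δ) A) (e : Ext Δ Γ) :
      Conv (.unbox (.box t) e) (wkTm (factorOpe e) t)
  | etaBox (t : Tm Γ (.box A)) :
      Conv t (.box (.unbox t .nil))
  | iteTrue (g : GExt Γ Θ) (t₁ t₂ : Tm Θ A) : Conv (.ite g .tt t₁ t₂) t₁
  | iteFalse (g : GExt Γ Θ) (t₁ t₂ : Tm Θ A) : Conv (.ite g .ff t₁ t₂) t₂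
  | iteEta (t : Tm Γ .bool) : Conv t (.ite .nil t .tt .ff)
  | iteUnbox (g : GExt Γ Θ) (b : Tm Γ .bool) (t₁ t₂ : Tm Θ (.box A)) (e : Ext Θ Θ') :
      Conv (.unbox (.ite g b t₁ t₂) e)
        (.ite (transG g (extToG e)) b (.unbox t₁ e) (.unbox t₂ e))
  | iteApp (g : GExt Γ Θ) (b : Tm Γ .bool) (t₁ t₂ : Tm Θ (.arr A B)) (u : Tm Θ A) :
      Conv (.app (.ite g b t₁ t₂) u) (.ite g b (.app t₁ u) (.app t₂ u))

/-!
The proof is a binary logical relation on closed terms that relates any two terms of a box type,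
so that a closed `f` related to itself sends any two secrets to convertible Booleans. Its fundamental lemma only ever recurses through lock-free contexts: a context containing a lock
admits no closing substitution, so `unbox` never has to be interpreted and `box t` is related to
everything. What remains is substitution metatheory. Since an `ite` may keep its scrutinee in a
shorter context than its branches, substitution commutes with weakening and with itself only up
to `≈`; the missing conversions come from pushing `ite` under a `λ` (`Conv.ite_lam`).
-/

/-! ### Order-preserving embeddings -/

def compOpe : {Γ Γ' Γ'' : Cx} → Ope Γ Γ' → Ope Γ' Γ'' → Ope Γ Γ''
  | _, _, _, o, .drop o' => .drop (compOpe o o')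
  | _, _, _, .drop o, .keep o' => .drop (compOpe o o')
  | _, _, _, .keep o, .keep o' => .keep (compOpe o o')
  | _, _, _, .keepLock o, .keepLock o' => .keepLock (compOpe o o')
  | _, _, _, .base, .base => .base

section equations

variable {Γ Γ' Γ'' Δ Θ : Cx} {A : Ty}

@[simp] theorem idOpe_snoc : idOpe (.snoc Γ A) = .keep (idOpe Γ) := rfl

@[simp] theorem idOpe_lock : idOpe (.lock Γ) = .keepLock (idOpe Γ) := rfl

@[simp] theorem compOpe_drop (o : Ope Γ Γ') (o' : Ope Γ' Γ'') :
    compOpe o (.drop (A := A) o') = .drop (compOpe o o') := by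
  cases o <;> rfl

@[simp] theorem compOpe_drop_keep (o : Ope Γ Γ') (o' : Ope Γ' Γ'') :
    compOpe (.drop (A := A) o) (.keep o') = .drop (compOpe o o') := rfl

@[simp] theorem compOpe_keep_keep (o : Ope Γ Γ') (o' : Ope Γ' Γ'') :
    compOpe (.keep (A := A) o) (.keep o') = .keep (compOpe o o') := rfl

@[simp] theorem compOpe_keepLock (o : Ope Γ Γ') (o' : Ope Γ' Γ'') :
    compOpe (.keepLock o) (.keepLock o') = .keepLock (compOpe o o') := rfl

@[simp] theorem extToG_nil : extToG (.nil : Ext Γ (.lock Γ)) = .lock .nil := rfl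

@[simp] theorem extToG_var (e : Ext Δ Γ) : extToG (.var (A := A) e) = .var (extToG e) := rfl

@[simp] theorem transG_nil (g : GExt Δ Γ) : transG g .nil = g := by
  cases Γ <;> rfl

@[simp] theorem transG_var (g : GExt Δ Γ) (g' : GExt Γ Θ) :
    transG g (.var (A := A) g') = .var (transG g g') := rfl

@[simp] theorem transG_lock (g : GExt Δ Γ) (g' : GExt Γ Θ) :
    transG g (.lock g') = .lock (transG g g') := rfl

@[simp] theorem factor_drop (e : Ext Δ Γ) (o : Ope Γ Γ') :
    factor e (.drop (A := A) o) = ⟨_, (factor e o).2.1, .var (factor e o).2.2⟩ := by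
  cases e <;> rfl

@[simp] theorem factor_nil_keepLock (o : Ope Γ Γ') :
    factor .nil (.keepLock o) = ⟨_, o, .nil⟩ := rfl

@[simp] theorem factor_var_keep (e : Ext Δ Γ) (o : Ope Γ Γ') :
    factor (.var (A := A) e) (.keep o) = ⟨_, (factor e o).2.1, .var (factor e o).2.2⟩ := rfl

@[simp] theorem factorG_drop (g : GExt Δ Γ) (o : Ope Γ Γ') :
    factorG g (.drop (A := A) o) = ⟨_, (factorG g o).2.1, .var (factorG g o).2.2⟩ := by
  cases g <;> rfl

@[simp] theorem factorG_var_keep (g : GExt Δ Γ) (o : Ope Γ Γ') :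
    factorG (.var (A := A) g) (.keep o) = ⟨_, (factorG g o).2.1, .var (factorG g o).2.2⟩ := rfl

@[simp] theorem factorG_lock_keepLock (g : GExt Δ Γ) (o : Ope Γ Γ') :
    factorG (.lock g) (.keepLock o) = ⟨_, (factorG g o).2.1, .lock (factorG g o).2.2⟩ := rfl

end equations

theorem idOpe_compOpe : ∀ {Γ Γ' : Cx} (o : Ope Γ Γ'), compOpe (idOpe Γ) o = o
  | _, _, .base => rfl
  | _, _, .drop o => by rw [compOpe_drop, idOpe_compOpe o]
  | _, _, .keep o => by rw [idOpe_snoc, compOpe_keep_keep, idOpe_compOpe o]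
  | _, _, .keepLock o => by rw [idOpe_lock, compOpe_keepLock, idOpe_compOpe o]

theorem compOpe_idOpe : ∀ {Γ Γ' : Cx} (o : Ope Γ Γ'), compOpe o (idOpe Γ') = o
  | _, _, .base => rfl
  | _, _, .drop o => by rw [idOpe_snoc, compOpe_drop_keep, compOpe_idOpe o]
  | _, _, .keep o => by rw [idOpe_snoc, compOpe_keep_keep, compOpe_idOpe o]
  | _, _, .keepLock o => by rw [idOpe_lock, compOpe_keepLock, compOpe_idOpe o]

theorem factor_idOpe : ∀ {Δ Γ : Cx} (e : Ext Δ Γ), factor e (idOpe Γ) = ⟨Δ, idOpe Δ, e⟩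
  | _, _, .nil => rfl
  | _, _, .var e => by rw [idOpe_snoc, factor_var_keep, factor_idOpe e]

theorem factorG_idOpe : ∀ {Δ Γ : Cx} (g : GExt Δ Γ), factorG g (idOpe Γ) = ⟨Δ, idOpe Δ, g⟩
  | _, .nil, .nil | _, .snoc _ _, .nil | _, .lock _, .nil => rfl
  | _, _, .var g => by rw [idOpe_snoc, factorG_var_keep, factorG_idOpe g]
  | _, _, .lock g => by rw [idOpe_lock, factorG_lock_keepLock, factorG_idOpe g]

theorem factor_compOpe : ∀ {Δ Γ Γ' Γ'' : Cx} (e : Ext Δ Γ) (o : Ope Γ Γ') (o' : Ope Γ' Γ''),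
    factor e (compOpe o o') =
      ⟨_, compOpe (factor e o).2.1 (factor (factor e o).2.2 o').2.1,
        (factor (factor e o).2.2 o').2.2⟩
  | _, _, _, _, e, o, .drop o' => by
      rw [compOpe_drop, factor_drop, factor_drop, factor_compOpe e o o']
  | _, _, _, _, e, .drop o, .keep o' => by
      rw [compOpe_drop_keep, factor_drop, factor_drop, factor_var_keep, factor_compOpe e o o']
  | _, _, _, _, .var e, .keep o, .keep o' => by
      rw [compOpe_keep_keep, factor_var_keep, factor_var_keep, factor_var_keep,
        factor_compOpe e o o']
  | _, _, _, _, .nil, .keepLock _, .keepLock _ => rfl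
  | _, _, _, _, e, .base, .base => nomatch e

theorem factorG_compOpe : ∀ {Δ Γ Γ' Γ'' : Cx} (g : GExt Δ Γ) (o : Ope Γ Γ') (o' : Ope Γ' Γ''),
    factorG g (compOpe o o') =
      ⟨_, compOpe (factorG g o).2.1 (factorG (factorG g o).2.2 o').2.1,
        (factorG (factorG g o).2.2 o').2.2⟩
  | _, _, _, _, g, o, .drop o' => by
      rw [compOpe_drop, factorG_drop, factorG_drop, factorG_compOpe g o o']
  | _, _, _, _, g, .drop o, .keep o' => by
      rw [compOpe_drop_keep, factorG_drop, factorG_drop, factorG_var_keep, factorG_compOpe g o o']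
  | _, _, _, _, .var g, .keep o, .keep o' => by
      rw [compOpe_keep_keep, factorG_var_keep, factorG_var_keep, factorG_var_keep,
        factorG_compOpe g o o']
  | _, _, _, _, .lock g, .keepLock o, .keepLock o' => by
      rw [compOpe_keepLock, factorG_lock_keepLock, factorG_lock_keepLock, factorG_lock_keepLock,
        factorG_compOpe g o o']
  | _, _, _, _, .nil, .keep _, .keep _ | _, _, _, _, .nil, .keepLock _, .keepLock _
  | _, _, _, _, .nil, .base, .base => rfl

/-! ### Weakening -/

section equations

variable {Γ Γ' Δ Θ : Cx} {A B : Ty}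

@[simp] theorem wkVar_drop (o : Ope Γ Γ') (v : Var Γ A) :
    wkVar (.drop (A := B) o) v = .succ (wkVar o v) := by
  cases v <;> rfl

@[simp] theorem wkVar_keep_succ (o : Ope Γ Γ') (v : Var Γ A) :
    wkVar (.keep (A := B) o) (.succ v) = .succ (wkVar o v) := rfl

@[simp] theorem wkTm_var (o : Ope Γ Γ') (v : Var Γ A) : wkTm o (.var v) = .var (wkVar o v) := rfl

@[simp] theorem wkTm_lam (o : Ope Γ Γ') (t : Tm (.snoc Γ A) B) :
    wkTm o (.lam t) = .lam (wkTm (.keep o) t) := rfl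

@[simp] theorem wkTm_app (o : Ope Γ Γ') (t : Tm Γ (.arr A B)) (u : Tm Γ A) :
    wkTm o (.app t u) = .app (wkTm o t) (wkTm o u) := rfl

@[simp] theorem wkTm_box (o : Ope Γ Γ') (t : Tm (.lock Γ) A) :
    wkTm o (.box t) = .box (wkTm (.keepLock o) t) := rfl

@[simp] theorem wkTm_unbox (o : Ope Γ Γ') (t : Tm Δ (.box A)) (e : Ext Δ Γ) :
    wkTm o (.unbox t e) = .unbox (wkTm (factor e o).2.1 t) (factor e o).2.2 := rfl

@[simp] theorem wkTm_ite (o : Ope Γ Γ') (g : GExt Θ Γ) (b : Tm Θ .bool) (t₁ t₂ : Tm Γ A) :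
    wkTm o (.ite g b t₁ t₂) =
      .ite (factorG g o).2.2 (wkTm (factorG g o).2.1 b) (wkTm o t₁) (wkTm o t₂) := rfl

@[simp] theorem wkSub_snoc (o : Ope Γ Γ') (s : Sub Γ Δ) (t : Tm Γ A) :
    wkSub o (.snoc s t) = .snoc (wkSub o s) (wkTm o t) := rfl

@[simp] theorem wkSub_lock (o : Ope Γ Γ') (s : Sub Θ Δ) (e : Ext Θ Γ) :
    wkSub o (.lock s e) = .lock (wkSub (factor e o).2.1 s) (factor e o).2.2 := rfl

end equations

theorem wkVar_idOpe : ∀ {Γ : Cx} {A : Ty} (v : Var Γ A), wkVar (idOpe Γ) v = v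
  | _, _, .zero => rfl
  | _, _, .succ v => by rw [idOpe_snoc, wkVar_keep_succ, wkVar_idOpe v]

theorem wkVar_wkVar : ∀ {Γ Γ' Γ'' : Cx} {A : Ty} (o : Ope Γ Γ') (o' : Ope Γ' Γ'') (v : Var Γ A),
    wkVar o' (wkVar o v) = wkVar (compOpe o o') v
  | _, _, _, _, o, .drop o', v => by
      rw [wkVar_drop, compOpe_drop, wkVar_drop, wkVar_wkVar o o' v]
  | _, _, _, _, .drop o, .keep o', v => by
      rw [wkVar_drop, wkVar_keep_succ, compOpe_drop_keep, wkVar_drop, wkVar_wkVar o o' v]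
  | _, _, _, _, .keep _, .keep _, .zero => rfl
  | _, _, _, _, .keep o, .keep o', .succ v => by
      rw [wkVar_keep_succ, wkVar_keep_succ, compOpe_keep_keep, wkVar_keep_succ, wkVar_wkVar o o' v]
  | _, _, _, _, .keepLock _, .keepLock _, v | _, _, _, _, .base, .base, v => nomatch v

theorem wkTm_idOpe : ∀ {Γ : Cx} {A : Ty} (t : Tm Γ A), wkTm (idOpe Γ) t = t
  | _, _, .var v => by rw [wkTm_var, wkVar_idOpe]
  | _, _, .lam t => by rw [wkTm_lam, ← idOpe_snoc, wkTm_idOpe t]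
  | _, _, .app t u => by rw [wkTm_app, wkTm_idOpe t, wkTm_idOpe u]
  | _, _, .box t => by rw [wkTm_box, ← idOpe_lock, wkTm_idOpe t]
  | _, _, .unbox t e => by
      rw [wkTm_unbox, factor_idOpe e]
      exact congrArg (·.unbox e) (wkTm_idOpe t)
  | _, _, .tt | _, _, .ff => rfl
  | _, _, .ite g b t₁ t₂ => by
      rw [wkTm_ite, factorG_idOpe g, wkTm_idOpe t₁, wkTm_idOpe t₂]
      exact congrArg (Tm.ite g · t₁ t₂) (wkTm_idOpe b)

theorem wkTm_wkTm : ∀ {Γ Γ' Γ'' : Cx} {A : Ty} (o : Ope Γ Γ') (o' : Ope Γ' Γ'') (t : Tm Γ A),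
    wkTm o' (wkTm o t) = wkTm (compOpe o o') t
  | _, _, _, _, o, o', .var v => by rw [wkTm_var, wkTm_var, wkVar_wkVar o o' v, wkTm_var]
  | _, _, _, _, o, o', .lam t => by
      rw [wkTm_lam, wkTm_lam, wkTm_wkTm (.keep o) (.keep o') t, compOpe_keep_keep, wkTm_lam]
  | _, _, _, _, o, o', .app t u => by
      rw [wkTm_app, wkTm_app, wkTm_wkTm o o' t, wkTm_wkTm o o' u, wkTm_app]
  | _, _, _, _, o, o', .box t => by
      rw [wkTm_box, wkTm_box, wkTm_wkTm (.keepLock o) (.keepLock o') t, compOpe_keepLock, wkTm_box]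
  | _, _, _, _, o, o', .unbox t e => by
      rw [wkTm_unbox, wkTm_unbox, wkTm_wkTm _ _ t, wkTm_unbox, factor_compOpe e o o']
  | _, _, _, _, _, _, .tt | _, _, _, _, _, _, .ff => rfl
  | _, _, _, _, o, o', .ite g b t₁ t₂ => by
      rw [wkTm_ite, wkTm_ite, wkTm_wkTm _ _ b, wkTm_wkTm o o' t₁, wkTm_wkTm o o' t₂, wkTm_ite,
        factorG_compOpe g o o']

theorem wkSub_idOpe : ∀ {Γ Δ : Cx} (σ : Sub Γ Δ), wkSub (idOpe Γ) σ = σ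
  | _, _, .empty => rfl
  | _, _, .snoc s t => by rw [wkSub_snoc, wkSub_idOpe s, wkTm_idOpe t]
  | _, _, .lock s e => by
      rw [wkSub_lock, factor_idOpe e]
      exact congrArg (·.lock e) (wkSub_idOpe s)

theorem wkSub_wkSub : ∀ {Γ Γ' Γ'' Δ : Cx} (o : Ope Γ Γ') (o' : Ope Γ' Γ'') (σ : Sub Γ Δ),
    wkSub o' (wkSub o σ) = wkSub (compOpe o o') σ
  | _, _, _, _, _, _, .empty => rfl
  | _, _, _, _, o, o', .snoc s t => by
      rw [wkSub_snoc, wkSub_snoc, wkSub_wkSub o o' s, wkTm_wkTm o o' t, wkSub_snoc]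
  | _, _, _, _, o, o', .lock s e => by
      rw [wkSub_lock, wkSub_lock, wkSub_wkSub _ _ s, wkSub_lock, factor_compOpe e o o']

/-! ### Substitution -/

section equations

variable {Γ Γ' Δ Θ : Cx} {A B : Ty}

@[simp] theorem idSub_snoc :
    idSub (.snoc Γ A) = .snoc (wkSub (.drop (idOpe Γ)) (idSub Γ)) (.var .zero) := rfl

@[simp] theorem idSub_lock : idSub (.lock Γ) = .lock (idSub Γ) .nil := rfl

@[simp] theorem substVar_zero (s : Sub Γ Δ) (t : Tm Γ A) : substVar (.snoc s t) .zero = t := rfl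

@[simp] theorem substVar_succ (s : Sub Γ Δ) (t : Tm Γ B) (v : Var Δ A) :
    substVar (.snoc s t) (.succ v) = substVar s v := rfl

@[simp] theorem trimSub_nil (s : Sub Θ Δ) (e : Ext Θ Γ) : trimSub (.lock s e) .nil = ⟨_, s, e⟩ :=
  rfl

@[simp] theorem trimSub_var (s : Sub Γ Δ) (t : Tm Γ A) (e : Ext Θ Δ) :
    trimSub (.snoc s t) (.var e) = trimSub s e := rfl

@[simp] theorem trimG_nil (s : Sub Γ' Θ) : trimG s .nil = ⟨Γ', s, .nil⟩ := by
  rw [trimG]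

@[simp] theorem trimG_var (s : Sub Γ' Θ) (t : Tm Γ' A) (g : GExt Γ Θ) :
    trimG (.snoc s t) (.var g) = trimG s g := rfl

@[simp] theorem trimG_lock (s : Sub Θ Δ) (e : Ext Θ Γ') (g : GExt Γ Δ) :
    trimG (.lock s e) (.lock g) = ⟨_, (trimG s g).2.1, transG (trimG s g).2.2 (extToG e)⟩ := rfl

@[simp] theorem subst_var (s : Sub Γ Δ) (v : Var Δ A) : subst s (.var v) = substVar s v := rfl

@[simp] theorem subst_lam (s : Sub Γ Δ) (t : Tm (.snoc Δ A) B) :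
    subst s (.lam t) = .lam (subst (.snoc (wkSub (.drop (idOpe _)) s) (.var .zero)) t) := rfl

@[simp] theorem subst_app (s : Sub Γ Δ) (t : Tm Δ (.arr A B)) (u : Tm Δ A) :
    subst s (.app t u) = .app (subst s t) (subst s u) := rfl

@[simp] theorem subst_box (s : Sub Γ Δ) (t : Tm (.lock Δ) A) :
    subst s (.box t) = .box (subst (.lock s .nil) t) := rfl

@[simp] theorem subst_unbox (s : Sub Γ Δ) (t : Tm Θ (.box A)) (e : Ext Θ Δ) :
    subst s (.unbox t e) = .unbox (subst (trimSub s e).2.1 t) (trimSub s e).2.2 := rfl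

@[simp] theorem subst_ite (s : Sub Γ Δ) (g : GExt Θ Δ) (b : Tm Θ .bool) (t₁ t₂ : Tm Δ A) :
    subst s (.ite g b t₁ t₂) =
      .ite (trimG s g).2.2 (subst (trimG s g).2.1 b) (subst s t₁) (subst s t₂) := rfl

end equations

theorem substVar_wkSub : ∀ {Γ Γ' Δ : Cx} {A : Ty} (o : Ope Γ Γ') (σ : Sub Γ Δ) (v : Var Δ A),
    substVar (wkSub o σ) v = wkTm o (substVar σ v)
  | _, _, _, _, _, .snoc _ _, .zero => rfl
  | _, _, _, _, o, .snoc s _, .succ v => by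
      rw [wkSub_snoc, substVar_succ, substVar_succ, substVar_wkSub o s v]

theorem substVar_idSub : ∀ {Γ : Cx} {A : Ty} (v : Var Γ A), substVar (idSub Γ) v = .var v
  | _, _, .zero => rfl
  | _, _, .succ v => by
      rw [idSub_snoc, substVar_succ, substVar_wkSub, substVar_idSub v, wkTm_var, wkVar_drop,
        wkVar_idOpe]

theorem trimSub_wkSub : ∀ {Γ Γ' Δ Θ : Cx} (o : Ope Γ Γ') (σ : Sub Γ Δ) (e : Ext Θ Δ),
    trimSub (wkSub o σ) e =
      ⟨_, wkSub (factor (trimSub σ e).2.2 o).2.1 (trimSub σ e).2.1,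
        (factor (trimSub σ e).2.2 o).2.2⟩
  | _, _, _, _, _, .lock _ _, .nil => rfl
  | _, _, _, _, o, .snoc s _, .var e => by
      rw [wkSub_snoc, trimSub_var, trimSub_var, trimSub_wkSub o s e]

theorem trimSub_idSub : ∀ {Γ Θ : Cx} (e : Ext Θ Γ), trimSub (idSub Γ) e = ⟨Θ, idSub Θ, e⟩
  | _, _, .nil => rfl
  | _, _, .var e => by
      rw [idSub_snoc, trimSub_var, trimSub_wkSub, trimSub_idSub e, factor_drop, factor_idOpe e,
        wkSub_idOpe]

theorem trimG_transG_extToG : ∀ {Γ' Δ Θ Λ : Cx} (s : Sub Γ' Δ) (e : Ext Θ Δ) (g : GExt Λ Θ),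
    trimG s (transG g (extToG e)) =
      ⟨_, (trimG (trimSub s e).2.1 g).2.1,
        transG (trimG (trimSub s e).2.1 g).2.2 (extToG (trimSub s e).2.2)⟩
  | _, _, _, _, .lock _ _, .nil, _ => by
      rw [extToG_nil, transG_lock, transG_nil, trimG_lock, trimSub_nil]
  | _, _, _, _, .snoc s _, .var e, g => by
      rw [extToG_var, transG_var, trimG_var, trimSub_var, trimG_transG_extToG s e g]

/-- The restriction of a substitution `s` for `Δ'` to the variables that `o : Δ ≤ Δ'` keeps. -/
def trimOpe : {Δ Δ' Γ : Cx} → Ope Δ Δ' → Sub Γ Δ' → Sub Γ Δ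
  | _, _, _, .base, s => s
  | _, _, _, .drop o, .snoc s _ => trimOpe o s
  | _, _, _, .keep o, .snoc s t => .snoc (trimOpe o s) t
  | _, _, _, .keepLock o, .lock s e => .lock (trimOpe o s) e

section equations

variable {Γ Δ Δ' Θ : Cx} {A : Ty}

@[simp] theorem trimOpe_drop (o : Ope Δ Δ') (s : Sub Γ Δ') (t : Tm Γ A) :
    trimOpe (.drop o) (.snoc s t) = trimOpe o s := rfl

@[simp] theorem trimOpe_keep (o : Ope Δ Δ') (s : Sub Γ Δ') (t : Tm Γ A) :
    trimOpe (.keep (A := A) o) (.snoc s t) = .snoc (trimOpe o s) t := rfl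

@[simp] theorem trimOpe_lock (o : Ope Δ Δ') (s : Sub Θ Δ') (e : Ext Θ Γ) :
    trimOpe (.keepLock o) (.lock s e) = .lock (trimOpe o s) e := rfl

end equations

theorem trimOpe_idOpe : ∀ {Δ Γ : Cx} (σ : Sub Γ Δ), trimOpe (idOpe Δ) σ = σ
  | _, _, .empty => rfl
  | _, _, .snoc s _ => by rw [idOpe_snoc, trimOpe_keep, trimOpe_idOpe s]
  | _, _, .lock s _ => by rw [idOpe_lock, trimOpe_lock, trimOpe_idOpe s]

theorem substVar_trimOpe : ∀ {Δ Δ' Γ : Cx} {A : Ty} (o : Ope Δ Δ') (σ : Sub Γ Δ') (v : Var Δ A),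
    substVar (trimOpe o σ) v = substVar σ (wkVar o v)
  | _, _, _, _, .drop o, .snoc s _, v => by
      rw [trimOpe_drop, wkVar_drop, substVar_succ, substVar_trimOpe o s v]
  | _, _, _, _, .keep _, .snoc _ _, .zero => rfl
  | _, _, _, _, .keep o, .snoc s _, .succ v => by
      rw [trimOpe_keep, wkVar_keep_succ, substVar_succ, substVar_succ, substVar_trimOpe o s v]

theorem trimOpe_wkSub : ∀ {Δ Δ' Γ Γ' : Cx} (o : Ope Δ Δ') (w : Ope Γ Γ') (σ : Sub Γ Δ'),
    trimOpe o (wkSub w σ) = wkSub w (trimOpe o σ)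
  | _, _, _, _, .base, _, _ => rfl
  | _, _, _, _, .drop o, w, .snoc s _ => by
      rw [wkSub_snoc, trimOpe_drop, trimOpe_drop, trimOpe_wkSub o w s]
  | _, _, _, _, .keep o, w, .snoc s _ => by
      rw [wkSub_snoc, trimOpe_keep, trimOpe_keep, wkSub_snoc, trimOpe_wkSub o w s]
  | _, _, _, _, .keepLock o, _, .lock s _ => by
      rw [wkSub_lock, trimOpe_lock, trimOpe_lock, wkSub_lock, trimOpe_wkSub o _ s]

theorem trimOpe_idSub : ∀ {Γ Γ' : Cx} (o : Ope Γ Γ'), trimOpe o (idSub Γ') = wkSub o (idSub Γ)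
  | _, _, .base => rfl
  | _, _, .drop o => by
      rw [idSub_snoc, trimOpe_drop, trimOpe_wkSub, trimOpe_idSub o, wkSub_wkSub, compOpe_drop,
        compOpe_idOpe]
  | _, _, .keep o => by
      rw [idSub_snoc, idSub_snoc, trimOpe_keep, trimOpe_wkSub, trimOpe_idSub o, wkSub_snoc,
        wkSub_wkSub, wkSub_wkSub, compOpe_drop, compOpe_idOpe, compOpe_drop_keep, idOpe_compOpe]
      rfl
  | _, _, .keepLock o => by
      rw [idSub_lock, idSub_lock, trimOpe_lock, trimOpe_idSub o, wkSub_lock, factor_nil_keepLock]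

theorem trimSub_trimOpe : ∀ {Δ Δ' Γ Θ : Cx} (o : Ope Δ Δ') (σ : Sub Γ Δ') (e : Ext Θ Δ),
    trimSub (trimOpe o σ) e =
      ⟨_, trimOpe (factor e o).2.1 (trimSub σ (factor e o).2.2).2.1,
        (trimSub σ (factor e o).2.2).2.2⟩
  | _, _, _, _, .drop o, .snoc s _, e => by
      rw [trimOpe_drop, factor_drop, trimSub_var, trimSub_trimOpe o s e]
  | _, _, _, _, .keep o, .snoc s _, .var e => by
      rw [trimOpe_keep, factor_var_keep, trimSub_var, trimSub_var, trimSub_trimOpe o s e]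
  | _, _, _, _, .keepLock _, .lock _ _, .nil => rfl

theorem trimG_trimOpe : ∀ {Δ Δ' Γ Θ : Cx} (o : Ope Δ Δ') (σ : Sub Γ Δ') (g : GExt Θ Δ),
    trimG (trimOpe o σ) g =
      ⟨_, trimOpe (factorG g o).2.1 (trimG σ (factorG g o).2.2).2.1,
        (trimG σ (factorG g o).2.2).2.2⟩
  | _, _, _, _, .drop o, .snoc s _, g => by
      rw [trimOpe_drop, factorG_drop, trimG_var, trimG_trimOpe o s g]
  | _, _, _, _, .keep o, .snoc s t, .var g => by
      rw [trimOpe_keep, factorG_var_keep, trimG_var, trimG_var, trimG_trimOpe o s g]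
  | _, _, _, _, .keepLock o, .lock s e, .lock g => by
      rw [trimOpe_lock, factorG_lock_keepLock, trimG_lock, trimG_lock, trimG_trimOpe o s g]
  | _, _, _, _, .keep _, .snoc _ _, .nil | _, _, _, _, .keepLock _, .lock _ _, .nil
  | _, _, _, _, .base, _, .nil => by simp only [trimG_nil]; rfl

theorem subst_wkTm : ∀ {Δ Δ' Γ : Cx} {A : Ty} (o : Ope Δ Δ') (σ : Sub Γ Δ') (t : Tm Δ A),
    subst σ (wkTm o t) = subst (trimOpe o σ) t
  | _, _, _, _, o, σ, .var v => by rw [wkTm_var, subst_var, subst_var, substVar_trimOpe o σ v]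
  | _, _, _, _, o, _, .lam t => by
      rw [wkTm_lam, subst_lam, subst_lam, subst_wkTm (.keep o) _ t, trimOpe_keep, trimOpe_wkSub]
  | _, _, _, _, o, σ, .app t u => by
      rw [wkTm_app, subst_app, subst_app, subst_wkTm o σ t, subst_wkTm o σ u]
  | _, _, _, _, o, _, .box t => by
      rw [wkTm_box, subst_box, subst_box, subst_wkTm (.keepLock o) _ t, trimOpe_lock]
  | _, _, _, _, o, σ, .unbox t e => by
      rw [wkTm_unbox, subst_unbox, subst_unbox, subst_wkTm _ _ t, trimSub_trimOpe o σ e]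
  | _, _, _, _, _, _, .tt | _, _, _, _, _, _, .ff => rfl
  | _, _, _, _, o, σ, .ite g b t₁ t₂ => by
      rw [wkTm_ite, subst_ite, subst_ite, subst_wkTm _ _ b, subst_wkTm o σ t₁, subst_wkTm o σ t₂,
        trimG_trimOpe o σ g]

theorem subst_wkSub_idSub {Γ Γ' : Cx} {A : Ty} (o : Ope Γ Γ') (t : Tm Γ A) :
    subst (wkSub o (idSub Γ)) t = subst (idSub Γ') (wkTm o t) := by
  rw [subst_wkTm, trimOpe_idSub]

def compSub : {Γ Δ Θ : Cx} → Sub Γ Δ → Sub Δ Θ → Sub Γ Θ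
  | _, _, _, _, .empty => .empty
  | _, _, _, s, .snoc σ t => .snoc (compSub s σ) (subst s t)
  | _, _, _, s, .lock σ e => .lock (compSub (trimSub s e).2.1 σ) (trimSub s e).2.2

section equations

variable {Γ Δ Θ Λ : Cx} {A : Ty}

@[simp] theorem compSub_snoc (s : Sub Γ Δ) (σ : Sub Δ Θ) (t : Tm Δ A) :
    compSub s (.snoc σ t) = .snoc (compSub s σ) (subst s t) := rfl

@[simp] theorem compSub_lock (s : Sub Γ Δ) (σ : Sub Λ Θ) (e : Ext Λ Δ) :
    compSub s (.lock σ e) = .lock (compSub (trimSub s e).2.1 σ) (trimSub s e).2.2 := rfl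

end equations

theorem substVar_compSub : ∀ {Γ Δ Θ : Cx} {A : Ty} (s : Sub Γ Δ) (σ : Sub Δ Θ) (v : Var Θ A),
    substVar (compSub s σ) v = subst s (substVar σ v)
  | _, _, _, _, _, .snoc _ _, .zero => rfl
  | _, _, _, _, s, .snoc σ _, .succ v => by
      rw [compSub_snoc, substVar_succ, substVar_succ, substVar_compSub s σ v]

theorem trimSub_compSub : ∀ {Γ Δ Θ Λ : Cx} (s : Sub Γ Δ) (σ : Sub Δ Θ) (e : Ext Λ Θ),
    trimSub (compSub s σ) e =
      ⟨_, compSub (trimSub s (trimSub σ e).2.2).2.1 (trimSub σ e).2.1,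
        (trimSub s (trimSub σ e).2.2).2.2⟩
  | _, _, _, _, _, .lock _ _, .nil => rfl
  | _, _, _, _, s, .snoc σ _, .var e => by
      rw [compSub_snoc, trimSub_var, trimSub_var, trimSub_compSub s σ e]

theorem trimG_compSub : ∀ {Γ Δ Θ Λ : Cx} (s : Sub Γ Δ) (σ : Sub Δ Θ) (g : GExt Λ Θ),
    trimG (compSub s σ) g =
      ⟨_, compSub (trimG s (trimG σ g).2.2).2.1 (trimG σ g).2.1,
        (trimG s (trimG σ g).2.2).2.2⟩
  | _, _, _, _, s, σ, .nil => by
      rw [trimG_nil σ]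
      dsimp only
      rw [trimG_nil s, trimG_nil]
  | _, _, _, _, s, .snoc σ _, .var g => by
      rw [compSub_snoc, trimG_var, trimG_var, trimG_compSub s σ g]
  | _, _, _, _, _, .lock σ _, .lock g => by
      rw [compSub_lock, trimG_lock, trimG_lock, trimG_compSub _ σ g, trimG_transG_extToG]

theorem compSub_wkSub : ∀ {Γ Δ Δ' Θ : Cx} (s : Sub Γ Δ') (o : Ope Δ Δ') (σ : Sub Δ Θ),
    compSub s (wkSub o σ) = compSub (trimOpe o s) σ
  | _, _, _, _, _, _, .empty => rfl
  | _, _, _, _, s, o, .snoc σ _ => by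
      rw [wkSub_snoc, compSub_snoc, compSub_snoc, compSub_wkSub s o σ, subst_wkTm]
  | _, _, _, _, s, o, .lock σ e => by
      rw [wkSub_lock, compSub_lock, compSub_lock, trimSub_trimOpe o s e, compSub_wkSub _ _ σ]

theorem compSub_idSub : ∀ {Γ Δ : Cx} (s : Sub Γ Δ), compSub s (idSub Δ) = s
  | _, _, .empty => rfl
  | _, _, .snoc s _ => by
      rw [idSub_snoc, compSub_snoc, compSub_wkSub, trimOpe_drop, trimOpe_idOpe, compSub_idSub s,
        subst_var, substVar_zero]
  | _, _, .lock s _ => by rw [idSub_lock, compSub_lock, trimSub_nil, compSub_idSub s]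

/-! ### Renamings -/

inductive IsRen : {Γ Δ : Cx} → Sub Γ Δ → Prop
  | empty {Γ : Cx} : IsRen (.empty : Sub Γ .nil)
  | snoc {Γ Δ : Cx} {A : Ty} {s : Sub Γ Δ} (h : IsRen s) (v : Var Γ A) : IsRen (.snoc s (.var v))
  | lock {Γ Δ Θ : Cx} {s : Sub Θ Δ} (h : IsRen s) (e : Ext Θ Γ) : IsRen (.lock s e)

theorem IsRen.wkSub : ∀ {Γ Γ' Δ : Cx} (o : Ope Γ Γ') {σ : Sub Γ Δ}, IsRen σ →
    IsRen (IKC.wkSub o σ)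
  | _, _, _, _, _, .empty => .empty
  | _, _, _, o, _, .snoc h _ => .snoc (h.wkSub o) _
  | _, _, _, _, _, .lock h _ => .lock (h.wkSub _) _

theorem isRen_idSub : ∀ (Γ : Cx), IsRen (idSub Γ)
  | .nil => .empty
  | .snoc Γ _ => .snoc ((isRen_idSub Γ).wkSub _) _
  | .lock Γ => .lock (isRen_idSub Γ) _

theorem IsRen.trimSub : ∀ {Γ Δ Θ : Cx} {σ : Sub Γ Δ}, IsRen σ → (e : Ext Θ Δ) →
    IsRen (IKC.trimSub σ e).2.1
  | _, _, _, _, .lock h _, .nil => h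
  | _, _, _, _, .snoc h _, .var e => h.trimSub e

theorem IsRen.trimG : ∀ {Γ Δ Θ : Cx} {σ : Sub Γ Δ}, IsRen σ → (g : GExt Θ Δ) →
    IsRen (IKC.trimG σ g).2.1
  | _, _, _, _, h, .nil => by rw [trimG_nil]; exact h
  | _, _, _, _, .snoc h _, .var g => h.trimG g
  | _, _, _, _, .lock h _, .lock g => h.trimG g

theorem compSub_wkSub_left_of_isRen : ∀ {Γ Γ' Δ Θ : Cx} (o : Ope Γ Γ') (s : Sub Γ Δ)
    {ρ : Sub Δ Θ}, IsRen ρ → compSub (wkSub o s) ρ = wkSub o (compSub s ρ)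
  | _, _, _, _, _, _, _, .empty => rfl
  | _, _, _, _, o, s, _, .snoc h _ => by
      rw [compSub_snoc, compSub_snoc, wkSub_snoc, compSub_wkSub_left_of_isRen o s h, subst_var,
        subst_var, substVar_wkSub]
  | _, _, _, _, o, s, _, .lock h e => by
      rw [compSub_lock, compSub_lock, trimSub_wkSub o s e, compSub_wkSub_left_of_isRen _ _ h,
        wkSub_lock]

theorem subst_subst_of_isRen : ∀ {Γ Δ Θ : Cx} {A : Ty} (s : Sub Γ Δ) {ρ : Sub Δ Θ}, IsRen ρ →
    (t : Tm Θ A) → subst s (subst ρ t) = subst (compSub s ρ) t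
  | _, _, _, _, s, _, _, .var v => by rw [subst_var, subst_var, substVar_compSub]
  | _, _, _, _, _, _, hρ, .lam t => by
      rw [subst_lam, subst_lam, subst_subst_of_isRen _ (.snoc (hρ.wkSub _) _) t, subst_lam,
        compSub_snoc, subst_var, substVar_zero, compSub_wkSub, trimOpe_drop, trimOpe_idOpe,
        compSub_wkSub_left_of_isRen _ _ hρ]
  | _, _, _, _, s, _, hρ, .app t u => by
      rw [subst_app, subst_app, subst_subst_of_isRen s hρ t, subst_subst_of_isRen s hρ u,
        subst_app]
  | _, _, _, _, _, _, hρ, .box t => by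
      rw [subst_box, subst_box, subst_subst_of_isRen _ (.lock hρ _) t, subst_box, compSub_lock,
        trimSub_nil]
  | _, _, _, _, _, _, hρ, .unbox t e => by
      rw [subst_unbox, subst_unbox, subst_subst_of_isRen _ (hρ.trimSub e) t, subst_unbox,
        trimSub_compSub]
  | _, _, _, _, _, _, _, .tt | _, _, _, _, _, _, _, .ff => rfl
  | _, _, _, _, s, _, hρ, .ite g b t₁ t₂ => by
      rw [subst_ite, subst_ite, subst_subst_of_isRen _ (hρ.trimG g) b, subst_subst_of_isRen s hρ t₁,
        subst_subst_of_isRen s hρ t₂, subst_ite, trimG_compSub]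

theorem idSub_compSub_of_isRen : ∀ {Γ Δ : Cx} {ρ : Sub Γ Δ}, IsRen ρ → compSub (idSub Γ) ρ = ρ
  | _, _, _, .empty => rfl
  | _, _, _, .snoc h _ => by rw [compSub_snoc, idSub_compSub_of_isRen h, subst_var, substVar_idSub]
  | _, _, _, .lock h _ => by rw [compSub_lock, trimSub_idSub, idSub_compSub_of_isRen h]

/-! ### Substitution up to conversion -/

/-- Built-in stability lets pointwise conversions survive weakening a substitution past a binder
(`SubConv.wkSub`), without proving that `≈` itself is stable under weakening. -/
def StableConv {Γ : Cx} {A : Ty} (t u : Tm Γ A) : Prop :=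
  ∀ {Γ' : Cx} (o : Ope Γ Γ'), Conv (wkTm o t) (wkTm o u)

theorem StableConv.refl {Γ : Cx} {A : Ty} (t : Tm Γ A) : StableConv t t := fun _ => .refl _

theorem StableConv.wkTm {Γ Γ' : Cx} {A : Ty} {t u : Tm Γ A} (h : StableConv t u) (o : Ope Γ Γ') :
    StableConv (wkTm o t) (wkTm o u) := fun o' => by
  rw [wkTm_wkTm, wkTm_wkTm]
  exact h _

theorem StableConv.conv {Γ : Cx} {A : Ty} {t u : Tm Γ A} (h : StableConv t u) : Conv t u := by
  simpa only [wkTm_idOpe] using h (idOpe Γ)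

inductive SubConv : {Γ Δ : Cx} → Sub Γ Δ → Sub Γ Δ → Prop
  | empty {Γ : Cx} : SubConv (.empty : Sub Γ .nil) .empty
  | snoc {Γ Δ : Cx} {A : Ty} {σ σ' : Sub Γ Δ} {t t' : Tm Γ A} :
      SubConv σ σ' → StableConv t t' → SubConv (.snoc σ t) (.snoc σ' t')
  | lock {Γ Δ Θ : Cx} {s s' : Sub Θ Δ} (h : SubConv s s') (e : Ext Θ Γ) :
      SubConv (.lock s e) (.lock s' e)

theorem SubConv.wkSub : ∀ {Γ Γ' Δ : Cx} {σ σ' : Sub Γ Δ}, SubConv σ σ' → (o : Ope Γ Γ') →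
    SubConv (IKC.wkSub o σ) (IKC.wkSub o σ')
  | _, _, _, _, _, .empty, _ => .empty
  | _, _, _, _, _, .snoc h r, o => .snoc (h.wkSub o) (r.wkTm o)
  | _, _, _, _, _, .lock h _, _ => .lock (h.wkSub _) _

theorem SubConv.trimSub : ∀ {Γ Δ Θ : Cx} {σ σ' : Sub Γ Δ}, SubConv σ σ' → (e : Ext Θ Δ) →
    ∃ (Θ' : Cx) (s₀ s₀' : Sub Θ' Θ) (e₀ : Ext Θ' Γ),
      IKC.trimSub σ e = ⟨Θ', s₀, e₀⟩ ∧ IKC.trimSub σ' e = ⟨Θ', s₀', e₀⟩ ∧ SubConv s₀ s₀'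
  | _, _, _, _, _, .lock h _, .nil => ⟨_, _, _, _, rfl, rfl, h⟩
  | _, _, _, _, _, .snoc h _, .var e => h.trimSub e

theorem SubConv.trimG : ∀ {Γ Δ Θ : Cx} {σ σ' : Sub Γ Δ}, SubConv σ σ' → (g : GExt Θ Δ) →
    ∃ (Γ₁ : Cx) (s₀ s₀' : Sub Γ₁ Θ) (g₀ : GExt Γ₁ Γ),
      IKC.trimG σ g = ⟨Γ₁, s₀, g₀⟩ ∧ IKC.trimG σ' g = ⟨Γ₁, s₀', g₀⟩ ∧ SubConv s₀ s₀'
  | _, _, _, _, _, h, .nil => ⟨_, _, _, _, trimG_nil _, trimG_nil _, h⟩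
  | _, _, _, _, _, .snoc h _, .var g => h.trimG g
  | _, _, _, _, _, .lock h _, .lock g => by
      obtain ⟨Γ₁, s₀, s₀', g₀, hσ, hσ', hs⟩ := h.trimG g
      exact ⟨Γ₁, s₀, s₀', _, by rw [trimG_lock, hσ], by rw [trimG_lock, hσ'], hs⟩

theorem SubConv.substVar : ∀ {Γ Δ : Cx} {A : Ty} {σ σ' : Sub Γ Δ}, SubConv σ σ' →
    (v : Var Δ A) → Conv (IKC.substVar σ v) (IKC.substVar σ' v)
  | _, _, _, _, _, .snoc _ r, .zero => r.conv
  | _, _, _, _, _, .snoc h _, .succ v => h.substVar v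

theorem SubConv.subst : ∀ {Γ Δ : Cx} {A : Ty} {σ σ' : Sub Γ Δ}, SubConv σ σ' →
    (t : Tm Δ A) → Conv (IKC.subst σ t) (IKC.subst σ' t)
  | _, _, _, _, _, h, .var v => h.substVar v
  | _, _, _, _, _, h, .lam t => .congLam ((h.wkSub _).snoc (StableConv.refl _) |>.subst t)
  | _, _, _, _, _, h, .app t u => .congApp (h.subst t) (h.subst u)
  | _, _, _, _, _, h, .box t => .congBox ((h.lock _).subst t)
  | _, _, _, _, _, h, .unbox t e => by
      obtain ⟨_, s₀, s₀', e₀, hσ, hσ', hs⟩ := h.trimSub e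
      rw [subst_unbox, subst_unbox, hσ, hσ']
      exact .congUnbox (hs.subst t)
  | _, _, _, _, _, _, .tt | _, _, _, _, _, _, .ff => .refl _
  | _, _, _, _, _, h, .ite g b t₁ t₂ => by
      obtain ⟨_, s₀, s₀', g₀, hσ, hσ', hs⟩ := h.trimG g
      rw [subst_ite, subst_ite, hσ, hσ']
      exact .congIte (hs.subst b) (h.subst t₁) (h.subst t₂)

theorem Conv.ite_lam {Γ Δ : Cx} {A B : Ty} (g : GExt Δ Γ) (b : Tm Δ .bool)
    (f₁ f₂ : Tm (.snoc Γ A) B) :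
    Conv (.ite g b (.lam f₁) (.lam f₂))
      (.lam (.ite (.var g) b (subst (idSub _) f₁) (subst (idSub _) f₂))) := by
  have beta (f : Tm (.snoc Γ A) B) :
      Conv (.app (.lam (wkTm (.keep (.drop (idOpe Γ))) f)) (.var .zero)) (subst (idSub _) f) := by
    refine (Conv.betaFun _ _).trans ?_
    rw [subst_wkTm, trimOpe_keep, idSub_snoc, trimOpe_drop, trimOpe_idOpe]
    exact .refl _
  refine (Conv.etaFun _).trans (.congLam ?_)
  rw [wkTm_ite, factorG_drop, factorG_idOpe]
  dsimp only
  rw [wkTm_idOpe, wkTm_lam, wkTm_lam]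
  exact (Conv.iteApp _ _ _ _ _).trans (.congIte (.refl _) (beta f₁) (beta f₂))

/-- Both sides are reducts of `app (ite g b (λ t₁') (λ t₂')) tt`, with `tᵢ'` the weakening of
`tᵢ` past a fresh variable: commute the application into the branches and β-reduce there, or push
the `ite` under the `λ` (`Conv.ite_lam`) and β-reduce outside, which trims `idSub` along `g`. -/
theorem Conv.ite_trimG_idSub {Γ Δ : Cx} {A : Ty} (g : GExt Δ Γ) (b : Tm Δ .bool)
    (t₁ t₂ : Tm Γ A) :
    Conv (.ite (trimG (idSub Γ) g).2.2 (subst (trimG (idSub Γ) g).2.1 b)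
        (subst (idSub Γ) t₁) (subst (idSub Γ) t₂))
      (.ite g b (subst (idSub Γ) t₁) (subst (idSub Γ) t₂)) := by
  have subst_wk (t : Tm Γ A) :
      subst (.snoc (idSub Γ) .tt) (wkTm (.drop (idOpe Γ)) t) = subst (idSub Γ) t := by
    rw [subst_wkTm, trimOpe_drop, trimOpe_idOpe]
  let lam (t : Tm Γ A) : Tm Γ (.arr .bool A) := .lam (wkTm (.drop (idOpe Γ)) t)
  have outside : Conv (.app (.ite g b (lam t₁) (lam t₂)) .tt)
      (.ite (trimG (idSub Γ) g).2.2 (subst (trimG (idSub Γ) g).2.1 b)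
        (subst (idSub Γ) t₁) (subst (idSub Γ) t₂)) := by
    refine (Conv.congApp (Conv.ite_lam g b _ _) (.refl _)).trans ((Conv.betaFun _ _).trans ?_)
    rw [subst_ite, trimG_var, subst_subst_of_isRen _ (isRen_idSub _),
      subst_subst_of_isRen _ (isRen_idSub _), compSub_idSub, subst_wk, subst_wk]
    exact .refl _
  have inside : Conv (.app (.ite g b (lam t₁) (lam t₂)) .tt)
      (.ite g b (subst (idSub Γ) t₁) (subst (idSub Γ) t₂)) := by
    refine (Conv.iteApp _ _ _ _ _).trans ?_
    rw [← subst_wk t₁, ← subst_wk t₂]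
    exact .congIte (.refl _) (.betaFun _ _) (.betaFun _ _)
  exact outside.symm.trans inside

theorem Conv.subst_idSub : ∀ {Γ : Cx} {A : Ty} (t : Tm Γ A), Conv (subst (idSub Γ) t) t
  | _, _, .var v => by rw [subst_var, substVar_idSub]; exact .refl _
  | _, _, .lam t => by rw [subst_lam, ← idSub_snoc]; exact .congLam (Conv.subst_idSub t)
  | _, _, .app t u => .congApp (Conv.subst_idSub t) (Conv.subst_idSub u)
  | _, _, .box t => by rw [subst_box, ← idSub_lock]; exact .congBox (Conv.subst_idSub t)
  | _, _, .unbox t e => by rw [subst_unbox, trimSub_idSub]; exact .congUnbox (Conv.subst_idSub t)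
  | _, _, .tt | _, _, .ff => .refl _
  | _, _, .ite g b t₁ t₂ => (Conv.ite_trimG_idSub g b t₁ t₂).trans
      (.congIte (.refl _) (Conv.subst_idSub t₁) (Conv.subst_idSub t₂))

theorem compSub_lift {Γ Δ Θ : Cx} {A : Ty} (s : Sub Γ Δ) (σ : Sub Δ Θ) :
    compSub (.snoc (wkSub (.drop (A := A) (idOpe Γ)) s) (.var .zero))
        (.snoc (wkSub (.drop (idOpe Δ)) σ) (.var .zero)) =
      .snoc (compSub (wkSub (.drop (idOpe Γ)) s) σ) (.var .zero) := by
  rw [compSub_snoc, compSub_wkSub, trimOpe_drop, trimOpe_idOpe, subst_var, substVar_zero]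

theorem Conv.wkTm_subst_of_isRen {Γ Γ' Δ : Cx} {A : Ty} {ρ : Sub Γ Δ} (hρ : IsRen ρ)
    (t : Tm Δ A) (o : Ope Γ Γ') : Conv (wkTm o (subst ρ t)) (subst (wkSub o ρ) t) := by
  have h : subst (wkSub o (idSub Γ)) (subst ρ t) = subst (wkSub o ρ) t := by
    rw [subst_subst_of_isRen _ hρ, compSub_wkSub_left_of_isRen o _ hρ, idSub_compSub_of_isRen hρ]
  rw [← h, subst_wkSub_idSub]
  exact (Conv.subst_idSub _).symm

theorem subConv_compSub_wkSub_of_isRen : ∀ {Γ Γ' Δ Θ : Cx} (w : Ope Γ Γ') {ρ : Sub Γ Δ},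
    IsRen ρ → (σ : Sub Δ Θ) → SubConv (compSub (wkSub w ρ) σ) (wkSub w (compSub ρ σ))
  | _, _, _, _, _, _, _, .empty => .empty
  | _, _, _, _, w, _, hρ, .snoc σ t => by
      rw [compSub_snoc, compSub_snoc, wkSub_snoc]
      refine .snoc (subConv_compSub_wkSub_of_isRen w hρ σ) fun o => ?_
      have h := Conv.wkTm_subst_of_isRen hρ t (compOpe w o)
      rw [← wkTm_wkTm, ← wkSub_wkSub] at h
      exact (Conv.wkTm_subst_of_isRen (hρ.wkSub w) t o).trans h.symm
  | _, _, _, _, _, _, hρ, .lock σ e => by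
      rw [compSub_lock, compSub_lock, trimSub_wkSub, wkSub_lock]
      exact .lock (subConv_compSub_wkSub_of_isRen _ (hρ.trimSub e) σ) _

theorem Conv.subst_subst_of_isRen_left : ∀ {Γ Δ Θ : Cx} {A : Ty} {ρ : Sub Γ Δ}, IsRen ρ →
    (σ : Sub Δ Θ) → (t : Tm Θ A) → Conv (subst ρ (subst σ t)) (subst (compSub ρ σ) t)
  | _, _, _, _, _, _, σ, .var v => by rw [subst_var, subst_var, substVar_compSub]; exact .refl _
  | _, _, _, _, _, hρ, σ, .lam t => by
      rw [subst_lam, subst_lam, subst_lam]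
      refine .congLam ((Conv.subst_subst_of_isRen_left (.snoc (hρ.wkSub _) _) _ t).trans ?_)
      rw [compSub_lift]
      exact (SubConv.snoc (subConv_compSub_wkSub_of_isRen _ hρ σ) (StableConv.refl _)).subst t
  | _, _, _, _, _, hρ, σ, .app t u => .congApp (Conv.subst_subst_of_isRen_left hρ σ t)
      (Conv.subst_subst_of_isRen_left hρ σ u)
  | _, _, _, _, _, hρ, σ, .box t => by
      rw [subst_box, subst_box, subst_box]
      refine .congBox ((Conv.subst_subst_of_isRen_left (.lock hρ _) _ t).trans ?_)
      rw [compSub_lock, trimSub_nil]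
      exact .refl _
  | _, _, _, _, _, hρ, σ, .unbox t e => by
      rw [subst_unbox, subst_unbox, subst_unbox, trimSub_compSub]
      exact .congUnbox (Conv.subst_subst_of_isRen_left (hρ.trimSub _) _ t)
  | _, _, _, _, _, _, _, .tt | _, _, _, _, _, _, _, .ff => .refl _
  | _, _, _, _, _, hρ, σ, .ite g b t₁ t₂ => by
      rw [subst_ite, subst_ite, subst_ite, trimG_compSub]
      exact .congIte (Conv.subst_subst_of_isRen_left (hρ.trimG _) _ b)
        (Conv.subst_subst_of_isRen_left hρ σ t₁) (Conv.subst_subst_of_isRen_left hρ σ t₂)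

theorem subConv_compSub_wkSub_idSub : ∀ {Γ Γ' Δ : Cx} (o : Ope Γ Γ') (σ : Sub Γ Δ),
    SubConv (compSub (wkSub o (idSub Γ)) σ) (wkSub o σ)
  | _, _, _, _, .empty => .empty
  | Γ, _, _, o, .snoc σ t => by
      rw [compSub_snoc, wkSub_snoc]
      refine .snoc (subConv_compSub_wkSub_idSub o σ) fun o' => ?_
      refine (Conv.wkTm_subst_of_isRen ((isRen_idSub Γ).wkSub o) t o').trans ?_
      rw [wkSub_wkSub, subst_wkSub_idSub, wkTm_wkTm]
      exact Conv.subst_idSub _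
  | _, _, _, _, .lock s _ => by
      rw [compSub_lock, wkSub_lock, trimSub_wkSub, trimSub_idSub]
      exact .lock (subConv_compSub_wkSub_idSub _ s) _

theorem Conv.wkTm_subst {Γ Γ' Δ : Cx} {A : Ty} (σ : Sub Γ Δ) (t : Tm Δ A) (o : Ope Γ Γ') :
    Conv (wkTm o (subst σ t)) (subst (wkSub o σ) t) := by
  have h := Conv.subst_subst_of_isRen_left ((isRen_idSub Γ).wkSub o) σ t
  rw [subst_wkSub_idSub] at h
  exact (Conv.subst_idSub _).symm.trans (h.trans ((subConv_compSub_wkSub_idSub o σ).subst t))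

theorem subConv_compSub_wkSub : ∀ {Γ Γ' Δ Θ : Cx} (w : Ope Γ Γ') (s : Sub Γ Δ) (σ : Sub Δ Θ),
    SubConv (compSub (wkSub w s) σ) (wkSub w (compSub s σ))
  | _, _, _, _, _, _, .empty => .empty
  | _, _, _, _, w, s, .snoc σ t => by
      rw [compSub_snoc, compSub_snoc, wkSub_snoc]
      refine .snoc (subConv_compSub_wkSub w s σ) fun o => ?_
      have h := Conv.wkTm_subst s t (compOpe w o)
      rw [← wkTm_wkTm, ← wkSub_wkSub] at h
      exact (Conv.wkTm_subst (wkSub w s) t o).trans h.symm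
  | _, _, _, _, _, _, .lock σ _ => by
      rw [compSub_lock, compSub_lock, trimSub_wkSub, wkSub_lock]
      exact .lock (subConv_compSub_wkSub _ _ σ) _

theorem Conv.subst_subst : ∀ {Γ Δ Θ : Cx} {A : Ty} (s : Sub Γ Δ) (σ : Sub Δ Θ) (t : Tm Θ A),
    Conv (subst s (subst σ t)) (subst (compSub s σ) t)
  | _, _, _, _, s, σ, .var v => by rw [subst_var, subst_var, substVar_compSub]; exact .refl _
  | _, _, _, _, s, σ, .lam t => by
      rw [subst_lam, subst_lam, subst_lam]
      refine .congLam ((Conv.subst_subst _ _ t).trans ?_)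
      rw [compSub_lift]
      exact (SubConv.snoc (subConv_compSub_wkSub _ s σ) (StableConv.refl _)).subst t
  | _, _, _, _, s, σ, .app t u => .congApp (Conv.subst_subst s σ t) (Conv.subst_subst s σ u)
  | _, _, _, _, _, _, .box t => by
      rw [subst_box, subst_box, subst_box]
      refine .congBox ((Conv.subst_subst _ _ t).trans ?_)
      rw [compSub_lock, trimSub_nil]
      exact .refl _
  | _, _, _, _, _, _, .unbox t _ => by
      rw [subst_unbox, subst_unbox, subst_unbox, trimSub_compSub]
      exact .congUnbox (Conv.subst_subst _ _ t)
  | _, _, _, _, _, _, .tt | _, _, _, _, _, _, .ff => .refl _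
  | _, _, _, _, s, σ, .ite g b t₁ t₂ => by
      rw [subst_ite, subst_ite, subst_ite, trimG_compSub]
      exact .congIte (Conv.subst_subst _ _ b) (Conv.subst_subst s σ t₁) (Conv.subst_subst s σ t₂)

theorem Conv.app_subst_lam {Γ Δ : Cx} {A B : Ty} (σ : Sub Γ Δ) (t : Tm (.snoc Δ A) B)
    (a : Tm Γ A) : Conv (.app (subst σ (.lam t)) a) (subst (.snoc σ a) t) := by
  refine (Conv.betaFun _ _).trans ((Conv.subst_subst _ _ t).trans ?_)
  rw [compSub_snoc, compSub_wkSub, trimOpe_drop, trimOpe_idOpe, subst_var, substVar_zero]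
  have h := subConv_compSub_wkSub_idSub (idOpe Γ) σ
  rw [wkSub_idOpe, wkSub_idOpe] at h
  exact (h.snoc (StableConv.refl a)).subst t

/-! ### The logical relation -/

def Related : (A : Ty) → Tm .nil A → Tm .nil A → Prop
  | .base, t, u | .bool, t, u => Conv t u
  | .arr A B, t, u => ∀ a b, Related A a b → Related B (.app t a) (.app u b)
  | .box _, _, _ => True

theorem Related.conv_left : ∀ {A : Ty} {t t' u : Tm .nil A}, Conv t t' → Related A t u →
    Related A t' u
  | .base, _, _, _, c, h | .bool, _, _, _, c, h => c.symm.trans h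
  | .arr _ _, _, _, _, c, h => fun a b hab => (h a b hab).conv_left (c.congApp (.refl a))
  | .box _, _, _, _, _, _ => trivial

theorem Related.conv_right : ∀ {A : Ty} {t u u' : Tm .nil A}, Conv u u' → Related A t u →
    Related A t u'
  | .base, _, _, _, c, h | .bool, _, _, _, c, h => h.trans c
  | .arr _ _, _, _, _, c, h => fun a b hab => (h a b hab).conv_right (c.congApp (.refl b))
  | .box _, _, _, _, _, _ => trivial

theorem Related.ite : ∀ {A : Ty} {b b' : Tm .nil .bool} {t₁ t₁' t₂ t₂' : Tm .nil A},
    Conv b b' → Related A t₁ t₁' → Related A t₂ t₂' →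
    Related A (.ite .nil b t₁ t₂) (.ite .nil b' t₁' t₂')
  | .base, _, _, _, _, _, _, hb, h₁, h₂ | .bool, _, _, _, _, _, _, hb, h₁, h₂ => hb.congIte h₁ h₂
  | .arr _ _, _, _, _, _, _, _, hb, h₁, h₂ => fun a c hac =>
      ((Related.ite hb (h₁ a c hac) (h₂ a c hac)).conv_left (Conv.iteApp _ _ _ _ _).symm).conv_right
        (Conv.iteApp _ _ _ _ _).symm
  | .box _, _, _, _, _, _, _, _, _, _ => trivial

/-- There is no `lock` case: no substitution from the empty context instantiates a lock. -/
inductive SubRelated : {Γ : Cx} → Sub .nil Γ → Sub .nil Γ → Prop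
  | empty : SubRelated .empty .empty
  | snoc {Γ : Cx} {A : Ty} {σ τ : Sub .nil Γ} {t u : Tm .nil A} :
      SubRelated σ τ → Related A t u → SubRelated (.snoc σ t) (.snoc τ u)

theorem SubRelated.not_ext : ∀ {Γ Δ : Cx} {σ τ : Sub .nil Γ}, SubRelated σ τ → Ext Δ Γ → False
  | _, _, _, _, .snoc h _, .var e => h.not_ext e

theorem SubRelated.trimG : ∀ {Γ Θ : Cx} {σ τ : Sub .nil Θ}, SubRelated σ τ → (g : GExt Γ Θ) →
    ∃ σ₀ τ₀ : Sub .nil Γ, IKC.trimG σ g = ⟨.nil, σ₀, .nil⟩ ∧ IKC.trimG τ g = ⟨.nil, τ₀, .nil⟩ ∧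
      SubRelated σ₀ τ₀
  | _, _, _, _, h, .nil => ⟨_, _, trimG_nil _, trimG_nil _, h⟩
  | _, _, _, _, .snoc h _, .var g => h.trimG g

theorem SubRelated.substVar : ∀ {Γ : Cx} {A : Ty} {σ τ : Sub .nil Γ}, SubRelated σ τ →
    (v : Var Γ A) → Related A (IKC.substVar σ v) (IKC.substVar τ v)
  | _, _, _, _, .snoc _ r, .zero => r
  | _, _, _, _, .snoc h _, .succ v => h.substVar v

theorem SubRelated.subst : ∀ {Γ : Cx} {A : Ty} {σ τ : Sub .nil Γ}, SubRelated σ τ →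
    (t : Tm Γ A) → Related A (IKC.subst σ t) (IKC.subst τ t)
  | _, _, _, _, h, .var v => h.substVar v
  | _, _, σ, τ, h, .lam t => fun a b hab =>
      (((h.snoc hab).subst t).conv_left (Conv.app_subst_lam σ t a).symm).conv_right
        (Conv.app_subst_lam τ t b).symm
  | _, _, _, _, h, .app t u => h.subst t _ _ (h.subst u)
  | _, _, _, _, _, .box _ => trivial
  | _, _, _, _, h, .unbox _ e => (h.not_ext e).elim
  | _, _, _, _, _, .tt | _, _, _, _, _, .ff => Conv.refl _
  | _, _, _, _, h, .ite g b t₁ t₂ => by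
      obtain ⟨σ₀, τ₀, hσ, hτ, h₀⟩ := h.trimG g
      rw [subst_ite, subst_ite, hσ, hτ]
      exact Related.ite (h₀.subst b) (h.subst t₁) (h.subst t₂)

theorem Related.refl {A : Ty} (t : Tm .nil A) : Related A t t :=
  ((SubRelated.empty.subst t).conv_left (Conv.subst_idSub t)).conv_right (Conv.subst_idSub t)

/-- Noninterference for IKC^Bool: for every closed term f : □Bool ⟶ Bool and
any two closed secrets s₁, s₂ : □Bool, app(f, s₁) ≈ app(f, s₂). -/
theorem noninterference (f : Tm .nil (.arr (.box .bool) .bool))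
    (s₁ s₂ : Tm .nil (.box .bool)) : Conv (.app f s₁) (.app f s₂) :=
  Related.refl f s₁ s₂ trivial

end IKC
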